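/- With F_s(1) := Γ(1+s/2)Γ(1/2+s/2)/Γ(1/2+s), one has the asymptotic behaviour lim_{s→∞} 2^s · F_s(1) / √(π s) = 1, where s runs over the positive integers. (The asymptotic decay F_s(1) ≈ 2^{−s}√(πs) stated in Lemma 4.1.) -/
import Mathlib


noncomputable section

open Filter

open Real Nat in
private lemma Fs1_key (s : ℕ) (hs : 1 ≤ s) :
    2 ^ s * (Real.Gamma (1 + (s : ℝ) / 2) * Real.Gamma (1 / 2 + (s : ℝ) / 2) /
      Real.Gamma (1 / 2 + (s : ℝ))) / Real.sqrt (Real.pi * s)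
      = Real.sqrt (Real.Wallis.W s * ((2 * s + 1) / (Real.pi * s))) := by
  have hπ := Real.pi_pos
  have hs' : (0:ℝ) < s := by exact_mod_cast hs
  have hfac : (0:ℝ) < (s ! : ℝ) := by positivity
  have hfac2 : (0:ℝ) < ((2*s)! : ℝ) := by positivity
  have hsqπ : (0:ℝ) < Real.sqrt Real.pi := Real.sqrt_pos.mpr hπ
  -- duplication formula at 1/2 + s/2
  have h1 : Real.Gamma (1/2 + (s:ℝ)/2) * Real.Gamma (1 + (s:ℝ)/2)
      = (s ! : ℝ) * ((2:ℝ)^s)⁻¹ * Real.sqrt Real.pi := by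
    have := Real.Gamma_mul_Gamma_add_half (1/2 + (s:ℝ)/2)
    rw [show (1/2 + (s:ℝ)/2 + 1/2) = 1 + (s:ℝ)/2 by ring,
      show (1 - 2*(1/2+(s:ℝ)/2)) = -(s:ℝ) by ring,
      show (2:ℝ)*(1/2+(s:ℝ)/2) = (s:ℝ)+1 by ring,
      Real.Gamma_nat_eq_factorial, Real.rpow_neg (by norm_num), Real.rpow_natCast] at this
    exact this
  -- duplication formula at s + 1/2
  have h2 : Real.Gamma ((s:ℝ) + 1/2) * (s ! : ℝ)
      = ((2*s)! : ℝ) * ((2:ℝ)^(2*s))⁻¹ * Real.sqrt Real.pi := by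
    have := Real.Gamma_mul_Gamma_add_half ((s:ℝ) + 1/2)
    rw [show ((s:ℝ) + 1/2 + 1/2) = (s:ℝ) + 1 by ring, Real.Gamma_nat_eq_factorial,
      show (1 - 2*((s:ℝ)+1/2)) = -((2*s:ℕ):ℝ) by push_cast; ring,
      show (2:ℝ)*((s:ℝ)+1/2) = ((2*s : ℕ):ℝ)+1 by push_cast; ring,
      Real.Gamma_nat_eq_factorial,
      Real.rpow_neg (by norm_num), Real.rpow_natCast] at this
    exact this
  have hΓpos : 0 < Real.Gamma (1/2 + (s:ℝ)) := Real.Gamma_pos_of_pos (by positivity)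
  have hΓval : Real.Gamma (1/2 + (s:ℝ))
      = ((2*s)! : ℝ) * ((2:ℝ)^(2*s))⁻¹ * Real.sqrt Real.pi / (s ! : ℝ) := by
    rw [eq_div_iff hfac.ne', show (1/2 + (s:ℝ)) = (s:ℝ) + 1/2 by ring]; exact h2
  -- the left side equals A / √(πs) with A = 4^s (s!)² / (2s)!
  have hA : 2 ^ s * (Real.Gamma (1 + (s : ℝ) / 2) * Real.Gamma (1 / 2 + (s : ℝ) / 2) /
      Real.Gamma (1 / 2 + (s : ℝ)))
      = (2:ℝ)^(2*s) * (s ! : ℝ)^2 / ((2*s)! : ℝ) := by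
    rw [mul_comm (Real.Gamma (1 + (s : ℝ) / 2)), h1, hΓval]
    field_simp
  rw [hA, Real.Wallis.W_eq_factorial_ratio]
  have h2s1 : (0:ℝ) < 2*(s:ℝ)+1 := by positivity
  have hW : (2:ℝ) ^ (4 * s) * (s ! : ℝ) ^ 4 / (((2 * s)! : ℝ) ^ 2 * (2 * (s:ℝ) + 1))
      * ((2 * (s:ℝ) + 1) / (Real.pi * s))
      = ((2:ℝ)^(2*s) * (s ! : ℝ)^2 / ((2*s)! : ℝ))^2 / (Real.pi * s) := by
    field_simp
    ring
  rw [hW, Real.sqrt_div (by positivity), Real.sqrt_sq (by positivity)]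

private lemma Fs1_limit :
    Tendsto (fun s : ℕ => Real.sqrt (Real.Wallis.W s * ((2 * s + 1) / (Real.pi * s))))
      atTop (nhds 1) := by
  have hπ := Real.pi_pos
  have h1 : Tendsto (fun s : ℕ => (2 * (s:ℝ) + 1) / (Real.pi * s)) atTop (nhds (2 / Real.pi)) := by
    have : ∀ᶠ s : ℕ in atTop, (2 + 1 / (s:ℝ)) / Real.pi = (2 * (s:ℝ) + 1) / (Real.pi * s) := by
      filter_upwards [eventually_ge_atTop 1] with s hs
      have hs' : ((s:ℝ)) ≠ 0 := by positivity
      field_simp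
    refine Tendsto.congr' this ?_
    have := (tendsto_const_div_atTop_nhds_zero_nat 1).const_add (2:ℝ)
    simpa using this.div_const Real.pi
  have h2 : Tendsto (fun s : ℕ => Real.Wallis.W s * ((2 * (s:ℝ) + 1) / (Real.pi * s)))
      atTop (nhds 1) := by
    have := Real.Wallis.tendsto_W_nhds_pi_div_two.mul h1
    rwa [show Real.pi / 2 * (2 / Real.pi) = 1 by field_simp] at this
  simpa using h2.sqrt

/-- `F_s(1) = Γ(1+s/2)Γ(1/2+s/2)/Γ(1/2+s)`. -/
def Fs1 (s : ℕ) : ℝ :=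
  Real.Gamma (1 + (s : ℝ) / 2) * Real.Gamma (1 / 2 + (s : ℝ) / 2) / Real.Gamma (1 / 2 + (s : ℝ))

/-- The asymptotic decay `F_s(1) ≈ 2^{−s}√(πs)` of Lemma 4.1. -/
theorem Fs1_asymptotics :
    Tendsto (fun s : ℕ => 2 ^ s * Fs1 s / Real.sqrt (Real.pi * s)) atTop (nhds 1) := by
  refine Fs1_limit.congr' ?_
  filter_upwards [eventually_ge_atTop 1] with s hs
  exact (Fs1_key s hs).symm
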